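/- arXiv:2007.08784 — 5 statements merged into one kernel-verified Lean document; each statement's English description precedes it below -/
import Mathlib

section
/- Let c be a point in the Euclidean plane ℝ², let r ≥ 0 and δ ≥ 0, let s be a point with dist(c,s) = r, and let x = 2c − s be the antipodal point of s on the circle of radius r centered at c. If v is a point with dist(v,x) ≤ 2r and dist(v,s) ≤ 2δ, then dist(v,c) ≤ √(2δ² + r²). -/
theorem stmt_0 (c s x v : EuclideanSpace ℝ (Fin 2)) (r δ : ℝ)
    (hr : 0 ≤ r) (hδ : 0 ≤ δ)
    (hs : dist c s = r) (hx : x = (2 : ℝ) • c - s)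
    (hvx : dist v x ≤ 2 * r) (hvs : dist v s ≤ 2 * δ) :
    dist v c ≤ Real.sqrt (2 * δ ^ 2 + r ^ 2) := by
  have key : dist v s ^ 2 + dist v x ^ 2 = 2 * dist v c ^ 2 + 2 * r ^ 2 := by
    have h := parallelogram_law_with_norm ℝ (v - c) (c - s)
    have h1 : v - c + (c - s) = v - s := by abel
    have h2 : v - c - (c - s) = v - x := by rw [hx]; module
    rw [h1, h2] at h
    simp only [dist_eq_norm] at *
    rw [← hs]
    ring_nf
    ring_nf at h
    linarith
  have hsq : dist v c ^ 2 ≤ 2 * δ ^ 2 + r ^ 2 := by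
    have h1 : dist v s ^ 2 ≤ (2 * δ) ^ 2 := by
      apply sq_le_sq' <;> [linarith [dist_nonneg (x := v) (y := s)]; exact hvs]
    have h2 : dist v x ^ 2 ≤ (2 * r) ^ 2 := by
      apply sq_le_sq' <;> [linarith [dist_nonneg (x := v) (y := x)]; exact hvx]
    nlinarith
  calc dist v c = Real.sqrt (dist v c ^ 2) := by
        rw [Real.sqrt_sq dist_nonneg]
    _ ≤ Real.sqrt (2 * δ ^ 2 + r ^ 2) := Real.sqrt_le_sqrt hsq
end

section
/- Let v₁ and v₂ be points in the Euclidean plane ℝ², let o be the midpoint of v₁ and v₂, and let δ = dist(o,v₁). If D is a closed disk of radius r ≥ 0 with center c such that v₁ ∈ D (i.e., dist(v₁,c) ≤ r) and dist(v₂,c) ≤ √(2δ² + r²), then o ∈ D (i.e., dist(o,c) ≤ r). -/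
theorem stmt_1 (v₁ v₂ c : EuclideanSpace ℝ (Fin 2)) (r : ℝ) (hr : 0 ≤ r)
    (hv₁ : dist v₁ c ≤ r)
    (hv₂ : dist v₂ c ≤ Real.sqrt (2 * (dist (midpoint ℝ v₁ v₂) v₁) ^ 2 + r ^ 2)) :
    dist (midpoint ℝ v₁ v₂) c ≤ r := by
  set δ := dist (midpoint ℝ v₁ v₂) v₁ with hδ
  have hap := EuclideanGeometry.dist_sq_add_dist_sq_eq_two_mul_dist_midpoint_sq_add_half_dist_sq
    c v₁ v₂
  have hhalf : dist v₁ v₂ / 2 = δ := by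
    rw [hδ, dist_midpoint_left]
    simp [div_eq_inv_mul]
  have hδ0 : 0 ≤ δ := dist_nonneg
  have h2 : (0:ℝ) ≤ 2 * δ ^ 2 + r ^ 2 := by positivity
  have hv₂' : dist v₂ c ^ 2 ≤ 2 * δ ^ 2 + r ^ 2 := by
    have := Real.sq_sqrt h2
    nlinarith [dist_nonneg (x := v₂) (y := c)]
  have hv₁' : dist v₁ c ^ 2 ≤ r ^ 2 := by nlinarith [dist_nonneg (x := v₁) (y := c)]
  have hsq : dist c (midpoint ℝ v₁ v₂) ^ 2 ≤ r ^ 2 := by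
    rw [hhalf] at hap
    have h1 : dist c v₁ = dist v₁ c := dist_comm _ _
    have h2' : dist c v₂ = dist v₂ c := dist_comm _ _
    rw [h1, h2'] at hap; linarith
  rw [dist_comm]
  nlinarith [dist_nonneg (x := c) (y := midpoint ℝ v₁ v₂)]
end

section
/- Let c be a point in the Euclidean plane ℝ² and r ≥ 0. Let s be a point with dist(c,s) = r and let x = 2c − s be its antipodal point on the circle of radius r centered at c. Let v₁ and v₂ be points such that dist(v₁,c) ≤ r, dist(v₂,x) ≤ 2r, and dist(v₂,s) ≤ dist(v₁,v₂). Then the midpoint o of v₁ and v₂ satisfies dist(o,c) ≤ r. -/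
/-!
Put `a = v₁ - c`, `b = v₂ - c`, `u = s - c`. Applying the parallelogram law to `(a, b)` and to
`(b, u)`, the hypothesis `‖b - u‖ ≤ ‖a - b‖` gives
`‖a + b‖² ≤ 2‖a‖² + ‖b + u‖² - 2‖u‖² ≤ 2r² + 4r² - 2r² = 4r²`.
-/

variable {V : Type*} [NormedAddCommGroup V] [InnerProductSpace ℝ V]

theorem norm_add_le_two_mul_of_norm_sub_le {a b u : V} (ha : ‖a‖ ≤ ‖u‖)
    (hbu : ‖b + u‖ ≤ 2 * ‖u‖) (hb : ‖b - u‖ ≤ ‖a - b‖) : ‖a + b‖ ≤ 2 * ‖u‖ := by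
  have hab := parallelogram_law_with_norm ℝ a b
  have hbu' := parallelogram_law_with_norm ℝ b u
  refine le_of_pow_le_pow_left₀ two_ne_zero (by positivity) ?_
  calc ‖a + b‖ ^ 2 = 2 * ‖a‖ ^ 2 + 2 * ‖b‖ ^ 2 - ‖a - b‖ ^ 2 := by linarith
    _ ≤ 2 * ‖a‖ ^ 2 + 2 * ‖b‖ ^ 2 - ‖b - u‖ ^ 2 := by gcongr
    _ = 2 * ‖a‖ ^ 2 + ‖b + u‖ ^ 2 - 2 * ‖u‖ ^ 2 := by linarith
    _ ≤ 2 * ‖u‖ ^ 2 + (2 * ‖u‖) ^ 2 - 2 * ‖u‖ ^ 2 := by gcongr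
    _ = (2 * ‖u‖) ^ 2 := by ring

theorem dist_midpoint_le_of_dist_antipode_le {c s v₁ v₂ : V} (hv₁ : dist v₁ c ≤ dist c s)
    (hv₂x : dist v₂ ((2 : ℝ) • c - s) ≤ 2 * dist c s) (hv₂s : dist v₂ s ≤ dist v₁ v₂) :
    dist (midpoint ℝ v₁ v₂) c ≤ dist c s := by
  rw [dist_comm c s] at *
  simp only [dist_eq_norm] at *
  rw [show v₂ - ((2 : ℝ) • c - s) = v₂ - c + (s - c) by module] at hv₂x
  rw [← sub_sub_sub_cancel_right v₂ s c, ← sub_sub_sub_cancel_right v₁ v₂ c] at hv₂s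
  have hsum := norm_add_le_two_mul_of_norm_sub_le hv₁ hv₂x hv₂s
  rw [show midpoint ℝ v₁ v₂ - c = (2 : ℝ)⁻¹ • (v₁ - c + (v₂ - c)) by
    rw [midpoint_eq_smul_add, invOf_eq_inv]; module, norm_smul]
  norm_num
  linarith

theorem stmt_2_general (c s x v₁ v₂ : EuclideanSpace ℝ (Fin 2)) (r : ℝ)
    (hs : dist c s = r) (hx : x = (2 : ℝ) • c - s)
    (hv₁ : dist v₁ c ≤ r) (hv₂x : dist v₂ x ≤ 2 * r)
    (hv₂s : dist v₂ s ≤ dist v₁ v₂) :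
    dist (midpoint ℝ v₁ v₂) c ≤ r := by
  subst hs hx
  exact dist_midpoint_le_of_dist_antipode_le hv₁ hv₂x hv₂s

theorem stmt_2 (c s x v₁ v₂ : EuclideanSpace ℝ (Fin 2)) (r : ℝ) (hr : 0 ≤ r)
    (hs : dist c s = r) (hx : x = (2 : ℝ) • c - s)
    (hv₁ : dist v₁ c ≤ r) (hv₂x : dist v₂ x ≤ 2 * r)
    (hv₂s : dist v₂ s ≤ dist v₁ v₂) :
    dist (midpoint ℝ v₁ v₂) c ≤ r :=
  stmt_2_general c s x v₁ v₂ r hs hx hv₁ hv₂x hv₂s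
end

section
/- For any set Q of points in the Euclidean plane ℝ² and any radius r ≥ 0, the r-coverage of Q, defined as the set CR_r(Q) = {x : ∃ c, Q ⊆ closedBall(c,r) and x ∈ closedBall(c,r)}, is a convex set. -/
theorem stmt_3 (Q : Set (EuclideanSpace ℝ (Fin 2))) (r : ℝ) (hr : 0 ≤ r) :
    Convex ℝ {x : EuclideanSpace ℝ (Fin 2) |
      ∃ c, Q ⊆ Metric.closedBall c r ∧ x ∈ Metric.closedBall c r} := by
  rintro x ⟨c1, hQ1, hx1⟩ y ⟨c2, hQ2, hy2⟩ a b ha hb hab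
  refine ⟨a • c1 + b • c2, fun q hq => ?_, ?_⟩ <;>
    simp only [Metric.mem_closedBall, dist_eq_norm] at *
  · calc ‖q - (a • c1 + b • c2)‖ = ‖a • (q - c1) + b • (q - c2)‖ := by
          congr 1
          rw [smul_sub, smul_sub]
          nth_rewrite 1 [← one_smul ℝ q, ← hab, add_smul]
          abel
      _ ≤ a * ‖q - c1‖ + b * ‖q - c2‖ := by
          refine (norm_add_le _ _).trans ?_
          rw [norm_smul, norm_smul, Real.norm_eq_abs, Real.norm_eq_abs,
            abs_of_nonneg ha, abs_of_nonneg hb]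
      _ ≤ a * r + b * r := by
          exact add_le_add (mul_le_mul_of_nonneg_left (hQ1 hq) ha)
            (mul_le_mul_of_nonneg_left (hQ2 hq) hb)
      _ = r := by rw [← add_mul, hab, one_mul]
  · calc ‖a • x + b • y - (a • c1 + b • c2)‖ = ‖a • (x - c1) + b • (y - c2)‖ := by
          congr 1
          rw [smul_sub, smul_sub]
          abel
      _ ≤ a * ‖x - c1‖ + b * ‖y - c2‖ := by
          refine (norm_add_le _ _).trans ?_
          rw [norm_smul, norm_smul, Real.norm_eq_abs, Real.norm_eq_abs,
            abs_of_nonneg ha, abs_of_nonneg hb]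
      _ ≤ a * r + b * r := add_le_add (mul_le_mul_of_nonneg_left hx1 ha)
            (mul_le_mul_of_nonneg_left hy2 hb)
      _ = r := by rw [← add_mul, hab, one_mul]
end

section
/- Let Q be a set of points in the Euclidean plane ℝ², let r > 0, and let c be a point with Q ⊆ closedBall(c,r). Suppose x is a point of the r-circular hull of Q (i.e., x belongs to every closed disk of radius r containing Q) with dist(x,c) = r, and let x' = 2c − x be the antipodal point of x on the circle of radius r centered at c. Then: (i) x' lies on the topological frontier of the r-coverage CR_r(Q); and (ii) for every point c' with Q ⊆ closedBall(c',r) and x' ∈ closedBall(c',r), one has c' = c. -/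
/-!
Every point of the coverage lies in a disk of radius `r` that also contains `x` (since `x` lies in
the circular hull), so the coverage sits inside the closed disk of radius `2r` about `x`. The
antipode `x'` lies on the boundary circle of that disk, hence outside the interior of the
coverage, while the disk about `c` puts it in the coverage. Any disk of radius `r` containing both
`x` and `x'`, which are `2r` apart, must be centred at their midpoint `c` by strict convexity.
-/

open Metric

section CircularHull

variable {E : Type*}

def circularHull [PseudoMetricSpace E] (r : ℝ) (Q : Set E) : Set E :=
  {x | ∀ c, Q ⊆ closedBall c r → x ∈ closedBall c r}

def circularCoverage [PseudoMetricSpace E] (r : ℝ) (Q : Set E) : Set E :=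
  {z | ∃ c, Q ⊆ closedBall c r ∧ z ∈ closedBall c r}

theorem circularCoverage_subset_closedBall [PseudoMetricSpace E] {r : ℝ} {Q : Set E} {x : E}
    (hx : x ∈ circularHull r Q) : circularCoverage r Q ⊆ closedBall x (2 * r) := by
  rintro z ⟨c, hQc, hzc⟩
  have hxc : dist x c ≤ r := hx c hQc
  rw [mem_closedBall] at hzc ⊢
  linarith [dist_triangle_right z x c]

variable [NormedAddCommGroup E] [NormedSpace ℝ E]

theorem mem_frontier_circularCoverage {r : ℝ} (hr : r ≠ 0) {Q : Set E} {x x' : E}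
    (hx : x ∈ circularHull r Q) (hx' : x' ∈ circularCoverage r Q) (hxx' : dist x' x = 2 * r) :
    x' ∈ frontier (circularCoverage r Q) := by
  refine ⟨subset_closure hx', fun hint => ?_⟩
  have hball : x' ∈ ball x (2 * r) := by
    rw [← interior_closedBall x (mul_ne_zero two_ne_zero hr)]
    exact interior_mono (circularCoverage_subset_closedBall hx) hint
  exact (mem_ball.mp hball).ne hxx'

theorem eq_midpoint_of_mem_closedBall_of_dist_eq [StrictConvexSpace ℝ E] {r : ℝ} {x x' c : E}
    (hx : x ∈ closedBall c r) (hx' : x' ∈ closedBall c r) (hxx' : dist x x' = 2 * r) :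
    c = midpoint ℝ x x' := by
  rw [mem_closedBall] at hx hx'
  have hsum := dist_triangle_right x x' c
  exact eq_midpoint_of_dist_eq_half (by linarith) (by rw [dist_comm]; linarith)

theorem dist_eq_two_mul_dist_of_midpoint_eq {x x' c : E} (h : midpoint ℝ x x' = c) :
    dist x x' = 2 * dist x c := by
  rw [← h, dist_left_midpoint, Real.norm_two, mul_inv_cancel_left₀ two_ne_zero]

theorem eq_of_mem_circularHull_of_dist_eq [StrictConvexSpace ℝ E] {r : ℝ} {Q : Set E}
    {x x' c c' : E} (hx : x ∈ circularHull r Q) (hxc : dist x c = r)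
    (hmid : midpoint ℝ x x' = c) (hQc' : Q ⊆ closedBall c' r) (hx'c' : x' ∈ closedBall c' r) :
    c' = c := by
  have hxx' : dist x x' = 2 * r := hxc ▸ dist_eq_two_mul_dist_of_midpoint_eq hmid
  rw [eq_midpoint_of_mem_closedBall_of_dist_eq (hx c' hQc') hx'c' hxx', hmid]

end CircularHull

theorem stmt_6 (Q : Set (EuclideanSpace ℝ (Fin 2))) (r : ℝ) (hr : 0 < r)
    (c x x' : EuclideanSpace ℝ (Fin 2))
    (hQc : Q ⊆ Metric.closedBall c r)
    (hx : ∀ c', Q ⊆ Metric.closedBall c' r → x ∈ Metric.closedBall c' r)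
    (hxc : dist x c = r) (hx' : x' = (2 : ℝ) • c - x) :
    x' ∈ frontier {z : EuclideanSpace ℝ (Fin 2) |
        ∃ c', Q ⊆ Metric.closedBall c' r ∧ z ∈ Metric.closedBall c' r} ∧
    ∀ c', Q ⊆ Metric.closedBall c' r → x' ∈ Metric.closedBall c' r → c' = c := by
  have hmid : midpoint ℝ x x' = c := by
    rw [hx', midpoint_eq_smul_add, add_sub_cancel, smul_smul]
    norm_num
  have hx'c : dist x' c = r := by
    rw [← hxc, ← hmid, dist_right_midpoint, dist_left_midpoint]
  have hx'x : dist x' x = 2 * r := by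
    rw [dist_comm, dist_eq_two_mul_dist_of_midpoint_eq hmid, hxc]
  exact ⟨mem_frontier_circularCoverage hr.ne' hx ⟨c, hQc, hx'c.le⟩ hx'x,
    fun c' => eq_of_mem_circularHull_of_dist_eq hx hxc hmid⟩
end
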